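/- Let u, v : ℝ → ℝ be smooth functions with v nonvanishing. Then for every n ≥ 1 and every x, (u/v)^(n)(x) = (1/v(x)) · ( u^(n)(x) − n! · ∑_{j=1}^{n} [v^(n+1−j)(x) / (n+1−j)!] · [(u/v)^(j−1)(x) / (j−1)!] ). -/

import Mathlib

private lemma diffIter {f : ℝ → ℝ} (hf : ContDiff ℝ (⊤ : ℕ∞) f) (k : ℕ) :
    Differentiable ℝ (iteratedDeriv k f) :=
  hf.differentiable_iteratedDeriv k (mod_cast ENat.coe_lt_top k)

private lemma leibniz_iteratedDeriv {f g : ℝ → ℝ} (hf : ContDiff ℝ (⊤ : ℕ∞) f)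
    (hg : ContDiff ℝ (⊤ : ℕ∞) g) (n : ℕ) (x : ℝ) :
    iteratedDeriv n (fun t => f t * g t) x =
      ∑ k ∈ Finset.range (n + 1),
        (n.choose k : ℝ) * iteratedDeriv k f x * iteratedDeriv (n - k) g x := by
  induction n generalizing x with
  | zero => simp
  | succ n ih =>
    have hd : ∀ k m : ℕ, Differentiable ℝ
        (fun y => (n.choose k : ℝ) * iteratedDeriv k f y * iteratedDeriv m g y) :=
      fun k m => ((diffIter hf k).const_mul _).mul (diffIter hg m)
    rw [iteratedDeriv_succ]
    have hfun : iteratedDeriv n (fun t => f t * g t) =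
        fun y => ∑ k ∈ Finset.range (n + 1),
          (n.choose k : ℝ) * iteratedDeriv k f y * iteratedDeriv (n - k) g y :=
      funext fun y => ih y
    rw [hfun]
    have hderiv : deriv (fun y => ∑ k ∈ Finset.range (n + 1),
        (n.choose k : ℝ) * iteratedDeriv k f y * iteratedDeriv (n - k) g y) x =
        ∑ k ∈ Finset.range (n + 1),
          ((n.choose k : ℝ) * iteratedDeriv (k + 1) f x * iteratedDeriv (n - k) g x +
           (n.choose k : ℝ) * iteratedDeriv k f x * iteratedDeriv (n - k + 1) g x) := by
      rw [deriv_fun_sum (fun k _ => hd k (n - k) x)]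
      refine Finset.sum_congr rfl fun k _ => ?_
      simp only [mul_assoc]
      rw [deriv_const_mul _ (d := fun y => iteratedDeriv k f y * iteratedDeriv (n - k) g y) (((diffIter hf k).mul (diffIter hg (n - k))) x),
        deriv_fun_mul (diffIter hf k x) (diffIter hg (n - k) x),
        ← iteratedDeriv_succ, ← iteratedDeriv_succ]
      ring
    rw [hderiv, Finset.sum_add_distrib]
    -- A = ∑_{k≤n} C(n,k) f^(k+1) g^(n-k),  B = ∑_{k≤n} C(n,k) f^(k) g^(n+1-k)
    have hB : ∑ k ∈ Finset.range (n + 1),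
        (n.choose k : ℝ) * iteratedDeriv k f x * iteratedDeriv (n - k + 1) g x =
        (iteratedDeriv 0 f x * iteratedDeriv (n + 1) g x) +
        ∑ k ∈ Finset.range n,
          (n.choose (k + 1) : ℝ) * iteratedDeriv (k + 1) f x * iteratedDeriv (n - k) g x := by
      rw [Finset.sum_range_succ']
      have : ∀ k ∈ Finset.range n, (n.choose (k + 1) : ℝ) * iteratedDeriv (k + 1) f x *
          iteratedDeriv (n - (k + 1) + 1) g x =
          (n.choose (k + 1) : ℝ) * iteratedDeriv (k + 1) f x * iteratedDeriv (n - k) g x := by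
        intro k hk
        rw [Finset.mem_range] at hk
        congr 2
        omega
      rw [Finset.sum_congr rfl this]
      simp [add_comm]
    rw [hB]
    -- RHS: split off k = 0, use Pascal
    rw [Finset.sum_range_succ' (fun k =>
      ((n + 1).choose k : ℝ) * iteratedDeriv k f x * iteratedDeriv (n + 1 - k) g x) (n + 1)]
    have pascal : ∀ k ∈ Finset.range (n + 1),
        (((n + 1).choose (k + 1) : ℝ)) * iteratedDeriv (k + 1) f x *
          iteratedDeriv (n + 1 - (k + 1)) g x =
        (n.choose k : ℝ) * iteratedDeriv (k + 1) f x * iteratedDeriv (n - k) g x +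
        (n.choose (k + 1) : ℝ) * iteratedDeriv (k + 1) f x * iteratedDeriv (n - k) g x := by
      intro k hk
      have : ((n + 1).choose (k + 1) : ℝ) = (n.choose k : ℝ) + (n.choose (k + 1) : ℝ) := by
        rw [Nat.choose_succ_succ]; push_cast; ring
      rw [show n + 1 - (k + 1) = n - k by omega, this]; ring
    rw [Finset.sum_congr rfl pascal, Finset.sum_add_distrib]
    have last : ∑ k ∈ Finset.range (n + 1),
        (n.choose (k + 1) : ℝ) * iteratedDeriv (k + 1) f x * iteratedDeriv (n - k) g x =
        ∑ k ∈ Finset.range n,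
          (n.choose (k + 1) : ℝ) * iteratedDeriv (k + 1) f x * iteratedDeriv (n - k) g x := by
      rw [Finset.sum_range_succ, Nat.choose_succ_self]
      simp
    rw [last]
    simp only [Nat.choose_zero_right, Nat.cast_one, one_mul, Nat.sub_zero]
    ring

theorem quotient_nth_deriv_formula (u v : ℝ → ℝ)
    (hu : ContDiff ℝ (⊤ : ℕ∞) u) (hv : ContDiff ℝ (⊤ : ℕ∞) v)
    (hv0 : ∀ x, v x ≠ 0) (n : ℕ) (hn : 1 ≤ n) (x : ℝ) :
    iteratedDeriv n (fun t => u t / v t) x =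
      (1 / v x) *
        (iteratedDeriv n u x -
          (n.factorial : ℝ) *
            ∑ j ∈ Finset.Icc 1 n,
              (iteratedDeriv (n + 1 - j) v x / ((n + 1 - j).factorial : ℝ)) *
                (iteratedDeriv (j - 1) (fun t => u t / v t) x / ((j - 1).factorial : ℝ))) := by
  set q : ℝ → ℝ := fun t => u t / v t with hq_def
  have hq : ContDiff ℝ (⊤ : ℕ∞) q := hu.div hv hv0
  have huvq : u = fun t => q t * v t := by
    funext t
    simp [hq_def, div_mul_cancel₀ _ (hv0 t)]
  have hlei := leibniz_iteratedDeriv hq hv n x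
  have hu_eq : iteratedDeriv n u x =
      ∑ k ∈ Finset.range (n + 1),
        (n.choose k : ℝ) * iteratedDeriv k q x * iteratedDeriv (n - k) v x := by
    rw [huvq]; exact hlei
  rw [Finset.sum_range_succ] at hu_eq
  simp only [Nat.choose_self, Nat.cast_one, one_mul, Nat.sub_self, iteratedDeriv_zero] at hu_eq
  -- rewrite the Icc sum as a range sum
  have hsum : (n.factorial : ℝ) * ∑ j ∈ Finset.Icc 1 n,
      (iteratedDeriv (n + 1 - j) v x / ((n + 1 - j).factorial : ℝ)) *
        (iteratedDeriv (j - 1) q x / ((j - 1).factorial : ℝ)) =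
      ∑ k ∈ Finset.range n, (n.choose k : ℝ) * iteratedDeriv k q x * iteratedDeriv (n - k) v x := by
    rw [show Finset.Icc 1 n = Finset.Ico 1 (n + 1) by rw [Finset.Ico_add_one_right_eq_Icc],
      Finset.sum_Ico_eq_sum_range]
    simp only [show n + 1 - 1 = n from rfl]
    rw [Finset.mul_sum]
    refine Finset.sum_congr rfl fun i hi => ?_
    rw [Finset.mem_range] at hi
    have h1 : n + 1 - (1 + i) = n - i := by omega
    have h2 : 1 + i - 1 = i := by omega
    rw [h1, h2]
    have hfac : ((n - i).factorial : ℝ) ≠ 0 := Nat.cast_ne_zero.mpr (Nat.factorial_ne_zero _)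
    have hfac2 : (i.factorial : ℝ) ≠ 0 := Nat.cast_ne_zero.mpr (Nat.factorial_ne_zero _)
    have hch : (n.choose i : ℝ) * (i.factorial : ℝ) * ((n - i).factorial : ℝ) = (n.factorial : ℝ) := by
      exact_mod_cast congrArg (Nat.cast : ℕ → ℝ)
        (Nat.choose_mul_factorial_mul_factorial (le_of_lt hi))
    rw [← hch]
    field_simp
  rw [hsum]
  have hvx := hv0 x
  field_simp
  linarith [hu_eq]
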